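/- arXiv:2402.00766 — 3 statements merged into one kernel-verified Lean document; each statement's English description precedes it below -/
import Mathlib

section
/- For any density operator ρ on the full qubit system, tr(P(V',G) ρ) = tr(|G'⟩⟨G'| ρ̂^{V'}), where ρ̂ = U ρ U with U = ∏_{(i,j)∈Ẽ} CZ^{(i,j)}, and ρ̂^{V'} is the partial trace of ρ̂ onto the qubits V'. -/
/-!
Conjugation by the full controlled-`Z` product `C = ∏_{(i,j) ∈ E} CZ^{(i,j)}` turns each
generator into a Pauli `X`: `S_v = C X_v C`. Since `C² = I`, the projector becomes
`P(V',G) = C (|+⟩⟨+|_{V'} ⊗ I) C`. The diagonal `C` factors into the gates inside `V'`, the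
gates on the cut `Ẽ` and the gates outside `V'`; the last ones only see the complement, on
which `|+⟩⟨+|_{V'} ⊗ I` is the identity, so they cancel, while the first ones turn `|+⟩⟨+|`
into `|G'⟩⟨G'|`. Hence `P(V',G) = U (|G'⟩⟨G'| ⊗ I) U`, and the claim follows from cyclicity
of the trace and `tr((A ⊗ I) M) = tr(A · tr_{V∖V'} M)`.
-/

open scoped Classical ComplexOrder
open Matrix

noncomputable section

namespace GraphStates

variable {V : Type} [Fintype V] [DecidableEq V]

/-- Matrices acting on the `|V|`-qubit Hilbert space `(ℂ²)^{⊗V}`,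
indexed by computational basis states `V → Bool`. -/
abbrev QMat (V : Type) := Matrix (V → Bool) (V → Bool) ℂ

/-- Pauli `Z` on qubit `i`. -/
def pauliZ (i : V) : QMat V :=
  Matrix.diagonal fun f => if f i then -1 else 1

/-- Pauli `X` on qubit `i`. -/
def pauliX (i : V) : QMat V :=
  Matrix.of fun f g => if f = Function.update g i (!g i) then 1 else 0

/-- Product of Pauli `Z` over a set `s` of qubits. -/
def zOn (s : Finset V) : QMat V :=
  Matrix.diagonal fun f => (-1 : ℂ) ^ (s.filter fun v => f v = true).card

/-- Controlled-`Z` gate on qubits `i`, `j`. -/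
def czMat (i j : V) : QMat V :=
  Matrix.diagonal fun f => if f i = true ∧ f j = true then -1 else 1

/-- The stabilizer generator `S_i = X_i ∏_{j ∈ N_i} Z_j` of the graph state of `G`. -/
def stab (G : SimpleGraph V) (i : V) : QMat V :=
  pauliX i * zOn (Finset.univ.filter fun j => G.Adj i j)

/-- The state `|+⟩^{⊗ V}`. -/
def plusVec : (V → Bool) → ℂ := fun _ => ((Real.sqrt 2 : ℂ))⁻¹ ^ Fintype.card V

/-- The product of the controlled-`Z` gates over all edges of `G`
(a single diagonal matrix, since `CZ` gates are diagonal and commute). -/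
def czProd (G : SimpleGraph V) : QMat V :=
  Matrix.diagonal fun f =>
    (-1 : ℂ) ^ ((Finset.univ : Finset (Sym2 V)).filter fun e =>
        e ∈ G.edgeSet ∧ ∀ v ∈ e, f v = true).card

/-- The graph state `|G⟩ = ∏_{(i,j) ∈ E} CZ^{(i,j)} |+⟩^{⊗n}` as a vector. -/
def graphStateVec (G : SimpleGraph V) : (V → Bool) → ℂ :=
  czProd G *ᵥ plusVec

/-- Outer product `|v⟩⟨v|`. -/
def outer {ι : Type} (v : ι → ℂ) : Matrix ι ι ℂ :=
  Matrix.of fun f g => v f * (starRingEnd ℂ) (v g)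

/-- Product of a family of matrices over a finite set (in a fixed enumeration order). -/
def prodOn (s : Finset V) (f : V → QMat V) : QMat V :=
  (s.toList.map f).prod

/-- The partial stabilizer projector `P(U,G) = ∏_{v ∈ U} (I + S_v)/2`. -/
def stabProj (G : SimpleGraph V) (s : Finset V) : QMat V :=
  prodOn s fun v => (2 : ℂ)⁻¹ • (1 + stab G v)

/-- Combine assignments on `s` and on its complement into a global assignment. -/
def merge (s : Finset V) (a : {v // v ∈ s} → Bool) (b : {v // v ∉ s} → Bool) : V → Bool :=
  fun v => if h : v ∈ s then a ⟨v, h⟩ else b ⟨v, h⟩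

/-- Partial trace onto the qubits in `s` (tracing out the complement). -/
def ptrace (s : Finset V) (ρ : QMat V) :
    Matrix ({v // v ∈ s} → Bool) ({v // v ∈ s} → Bool) ℂ :=
  Matrix.of fun a b => ∑ h : {v // v ∉ s} → Bool, ρ (merge s a h) (merge s b h)

/-- Embed an operator on the qubits in `s` into the full system, tensoring with
the identity on the remaining qubits: `A ↦ A ⊗ I`. -/
def embedOp (s : Finset V)
    (A : Matrix ({v // v ∈ s} → Bool) ({v // v ∈ s} → Bool) ℂ) : QMat V :=
  Matrix.of fun f g =>
    if ∀ v, v ∉ s → f v = g v then A (fun v => f v.1) (fun v => g v.1) else 0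

/-- The subgraph of `G` induced by the vertex subset `s`. -/
def inducedGraph (G : SimpleGraph V) (s : Finset V) : SimpleGraph {v // v ∈ s} :=
  G.comap Subtype.val

/-- The subgraph of `G` induced by the complement of `s`. -/
def inducedGraphC (G : SimpleGraph V) (s : Finset V) : SimpleGraph {v // v ∉ s} :=
  G.comap Subtype.val

/-- The product `U = ∏_{(i,j) ∈ Ẽ} CZ^{(i,j)}` of controlled-`Z` gates over the set `Ẽ`
of edges of `G` having exactly one endpoint in `s`. -/
def czCut (G : SimpleGraph V) (s : Finset V) : QMat V :=
  Matrix.diagonal fun f =>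
    (-1 : ℂ) ^ ((Finset.univ : Finset (Sym2 V)).filter fun e =>
        e ∈ G.edgeSet ∧ (∀ v ∈ e, f v = true) ∧ (∃ v ∈ e, v ∈ s) ∧ (∃ v ∈ e, v ∉ s)).card

/-- Tensor product of an operator on the qubits in `s` with an operator on the
complementary qubits, as an operator on the full system. -/
def tensorSplit (s : Finset V)
    (A : Matrix ({v // v ∈ s} → Bool) ({v // v ∈ s} → Bool) ℂ)
    (B : Matrix ({v // v ∉ s} → Bool) ({v // v ∉ s} → Bool) ℂ) : QMat V :=
  Matrix.of fun f g =>
    A (fun v => f v.1) (fun v => g v.1) * B (fun v => f v.1) (fun v => g v.1)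

/-- `ρ` is a pure state: the outer product of a normalized vector. -/
def IsPure {ι : Type} [Fintype ι] (ρ : Matrix ι ι ℂ) : Prop :=
  ∃ v : ι → ℂ, (∑ x, Complex.normSq (v x)) = 1 ∧ ρ = outer v

/-- `ρ` is separable with respect to the bipartition `(s, sᶜ)` of the qubits:
a probabilistic mixture of tensor products of pure states of the two subsystems. -/
def SeparableWrt (s : Finset V) (ρ : QMat V) : Prop :=
  ∃ (ι : Type) (_ : Fintype ι) (p : ι → ℝ)
    (a : ι → Matrix ({v // v ∈ s} → Bool) ({v // v ∈ s} → Bool) ℂ)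
    (b : ι → Matrix ({v // v ∉ s} → Bool) ({v // v ∉ s} → Bool) ℂ),
    (∀ k, 0 ≤ p k) ∧ (∑ k, p k) = 1 ∧
    (∀ k, IsPure (a k) ∧ IsPure (b k)) ∧
    ρ = ∑ k, (p k : ℂ) • tensorSplit s (a k) (b k)

/-- `ρ` is biseparable: a convex mixture of states, each separable with respect to
some (nontrivial) bipartition of the qubits. -/
def Biseparable (ρ : QMat V) : Prop :=
  ∃ (ι : Type) (_ : Fintype ι) (q : ι → ℝ) (A : ι → Finset V) (σ : ι → QMat V),
    (∀ k, 0 ≤ q k) ∧ (∑ k, q k) = 1 ∧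
    (∀ k, (A k).Nonempty ∧ A k ≠ Finset.univ ∧ SeparableWrt (A k) (σ k)) ∧
    ρ = ∑ k, (q k : ℂ) • σ k

/-- `𝒱` is a partition of the vertex subset `t` into nonempty pairwise disjoint blocks. -/
def IsPartitionOn (t : Finset V) (𝒱 : Finset (Finset V)) : Prop :=
  (∀ B ∈ 𝒱, B.Nonempty) ∧
  ((𝒱 : Set (Finset V)).Pairwise fun B C => Disjoint B C) ∧
  𝒱.sup id = t

/-- The entanglement witness `W(𝒱,G) = (k − 1/2) I − ∑_{B ∈ 𝒱} P(B,G)`. -/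
def witnessW (G : SimpleGraph V) (𝒱 : Finset (Finset V)) : QMat V :=
  ((𝒱.card : ℂ) - 1/2) • 1 - ∑ B ∈ 𝒱, stabProj G B

/-- The white-noise-mixed state `ρ(p) = (1−p) ρ₀ + p I / 2^n`. -/
def whiteNoise (ρ0 : QMat V) (p : ℝ) : QMat V :=
  ((1 - p : ℝ) : ℂ) • ρ0 + ((p : ℂ) / (2 ^ Fintype.card V)) • 1

/-- The element `∏_i S_i^{x_i}` of the stabilizer group of `|G⟩`. -/
def stabElem (G : SimpleGraph V) (x : V → Bool) : QMat V :=
  prodOn (Finset.univ.filter fun i => x i = true) (stab G)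

/-- The stabilizer generator of the induced subgraph `G' = G[s]`, extended by
identity to the full system: `S_i' = X_i ∏_{j ∈ N_i ∩ s} Z_j`. -/
def subStab (G : SimpleGraph V) (s : Finset V) (i : V) : QMat V :=
  pauliX i * zOn ((Finset.univ.filter fun j => G.Adj i j) ∩ s)

def edgeSign (G : SimpleGraph V) (f : V → Bool) : ℂ :=
  (-1) ^ ((Finset.univ : Finset (Sym2 V)).filter fun e =>
    e ∈ G.edgeSet ∧ ∀ v ∈ e, f v = true).card

def cutSign (G : SimpleGraph V) (s : Finset V) (f : V → Bool) : ℂ :=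
  (-1) ^ ((Finset.univ : Finset (Sym2 V)).filter fun e =>
    e ∈ G.edgeSet ∧ (∀ v ∈ e, f v = true) ∧
      (∃ v ∈ e, v ∈ s) ∧ (∃ v ∈ e, v ∉ s)).card

theorem czProd_eq_diagonal (G : SimpleGraph V) : czProd G = diagonal (edgeSign G) := rfl

theorem czCut_eq_diagonal (G : SimpleGraph V) (s : Finset V) :
    czCut G s = diagonal (cutSign G s) := rfl

theorem edgeSign_mul_self (G : SimpleGraph V) (f : V → Bool) :
    edgeSign G f * edgeSign G f = 1 := by
  rw [edgeSign, ← mul_pow]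
  simp

theorem star_edgeSign (G : SimpleGraph V) (f : V → Bool) :
    starRingEnd ℂ (edgeSign G f) = edgeSign G f := by
  simp [edgeSign]

theorem czProd_mul_self (G : SimpleGraph V) : czProd G * czProd G = 1 := by
  rw [czProd_eq_diagonal, diagonal_mul_diagonal, ← diagonal_one]
  exact congrArg diagonal (funext (edgeSign_mul_self G))

theorem edgeSign_comap (G : SimpleGraph V) (p : V → Prop) [DecidablePred p] (f : V → Bool) :
    edgeSign (G.comap (Subtype.val : {v // p v} → V)) (fun v => f v) =
      (-1) ^ ((Finset.univ : Finset (Sym2 V)).filter fun e =>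
        e ∈ G.edgeSet ∧ (∀ v ∈ e, f v = true) ∧ ∀ v ∈ e, p v).card := by
  rw [edgeSign,
    ← Finset.card_map ⟨Sym2.map Subtype.val, Sym2.map.injective Subtype.val_injective⟩]
  congr 2
  ext e
  simp only [Finset.mem_map, Finset.mem_filter, Finset.mem_univ, true_and,
    Function.Embedding.coeFn_mk]
  constructor
  · rintro ⟨e, ⟨he, hf⟩, rfl⟩
    induction e using Sym2.ind with
    | _ a b => simp_all [a.2, b.2]
  · induction e using Sym2.ind with
    | _ x y =>
      simp only [Sym2.forall_mem_pair, SimpleGraph.mem_edgeSet]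
      rintro ⟨hxy, ⟨hx, hy⟩, px, py⟩
      exact ⟨s(⟨x, px⟩, ⟨y, py⟩), by simp_all⟩

theorem edgeSign_inducedGraph (G : SimpleGraph V) (s : Finset V) (f : V → Bool) :
    edgeSign (inducedGraph G s) (fun v => f v) =
      (-1) ^ ((Finset.univ : Finset (Sym2 V)).filter fun e =>
        e ∈ G.edgeSet ∧ (∀ v ∈ e, f v = true) ∧ ∀ v ∈ e, v ∈ s).card := by
  rw [inducedGraph]
  convert edgeSign_comap G (· ∈ s) f

theorem edgeSign_eq_inducedGraph_mul_cutSign_mul_inducedGraphC (G : SimpleGraph V)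
    (s : Finset V) (f : V → Bool) :
    edgeSign G f = edgeSign (inducedGraph G s) (fun v => f v) * cutSign G s f *
      edgeSign (inducedGraphC G s) (fun v => f v) := by
  rw [edgeSign_inducedGraph, inducedGraphC, edgeSign_comap, cutSign, ← pow_add,
    ← pow_add, edgeSign]
  congr 1
  set A := (Finset.univ : Finset (Sym2 V)).filter fun e =>
    e ∈ G.edgeSet ∧ ∀ v ∈ e, f v = true
  rw [← A.card_filter_add_card_filter_not (fun e => ∀ v ∈ e, v ∈ s),
    ← (A.filter fun e => ¬ ∀ v ∈ e, v ∈ s).card_filter_add_card_filter_not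
      (fun e => ∃ v ∈ e, v ∈ s), ← add_assoc]
  simp only [A, Finset.filter_filter]
  refine congrArg₂ (· + ·) (congrArg₂ (· + ·) ?_ ?_) ?_
  all_goals
    congr 1
    apply Finset.filter_congr
    intro e _
    induction e using Sym2.ind with
    | _ x y =>
      simp only [Sym2.mem_iff, forall_eq_or_imp, forall_eq, exists_eq_or_imp, exists_eq_left]
      tauto

theorem card_edges_update_true (G : SimpleGraph V) (f : V → Bool) (v : V) :
    ((Finset.univ : Finset (Sym2 V)).filter fun e =>
        e ∈ G.edgeSet ∧ ∀ u ∈ e, Function.update f v true u = true).card =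
      ((Finset.univ : Finset (Sym2 V)).filter fun e =>
        e ∈ G.edgeSet ∧ ∀ u ∈ e, Function.update f v false u = true).card +
      ((Finset.univ.filter fun j => G.Adj v j).filter fun j => f j = true).card := by
  set B := (Finset.univ : Finset (Sym2 V)).filter fun e =>
    e ∈ G.edgeSet ∧ ∀ u ∈ e, Function.update f v true u = true
  rw [← B.card_filter_add_card_filter_not (fun e => v ∉ e)]
  simp only [B, Finset.filter_filter, not_not]
  congr 1
  · congr 1
    apply Finset.filter_congr
    intro e _
    induction e using Sym2.ind with
    | _ x y =>
      simp only [Sym2.mem_iff, forall_eq_or_imp, forall_eq, Function.update_apply]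
      by_cases hx : x = v <;> by_cases hy : y = v <;> simp [hx, hy, @eq_comm _ v]
  · symm
    refine Finset.card_bij (fun j _ => s(v, j)) ?_ ?_ ?_
    · intro j hj
      simp only [Finset.mem_filter, Finset.mem_univ, true_and] at hj ⊢
      refine ⟨⟨hj.1, ?_⟩, Sym2.mem_mk_left v j⟩
      simp [Function.update_apply, hj.2]
    · intro j₁ _ j₂ _ h
      exact Sym2.congr_right.1 h
    · intro e he
      simp only [Finset.mem_filter, Finset.mem_univ, true_and] at he
      obtain ⟨⟨hE, hall⟩, hv⟩ := he
      obtain ⟨j, rfl⟩ := Sym2.mem_iff_exists.1 hv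
      have hadj : G.Adj v j := hE
      refine ⟨j, ?_, rfl⟩
      have hj := hall j (Sym2.mem_mk_right v j)
      rw [Function.update_of_ne hadj.ne'] at hj
      simp [hadj, hj]

theorem edgeSign_update_mul (G : SimpleGraph V) (f : V → Bool) (v : V) :
    edgeSign G (Function.update f v (!f v)) * edgeSign G f =
      (-1) ^ ((Finset.univ.filter fun j => G.Adj v j).filter fun j => f j = true).card := by
  have hflip : edgeSign G (Function.update f v true) =
      edgeSign G (Function.update f v false) *
        (-1) ^ ((Finset.univ.filter fun j => G.Adj v j).filter fun j => f j = true).card := by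
    rw [edgeSign, edgeSign, card_edges_update_true, pow_add]
  have key : ∀ b, edgeSign G (Function.update f v (!b)) * edgeSign G (Function.update f v b) =
      (-1) ^ ((Finset.univ.filter fun j => G.Adj v j).filter fun j => f j = true).card := by
    rintro (_ | _)
    · rw [Bool.not_false, hflip, mul_comm, ← mul_assoc, edgeSign_mul_self, one_mul]
    · rw [Bool.not_true, hflip, ← mul_assoc, edgeSign_mul_self, one_mul]
  simpa using key (f v)

theorem stab_eq_czProd_mul_pauliX_mul_czProd (G : SimpleGraph V) (v : V) :
    stab G v = czProd G * pauliX v * czProd G := by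
  refine Matrix.ext fun f g => ?_
  rw [czProd_eq_diagonal, mul_diagonal, diagonal_mul, stab, zOn, mul_diagonal]
  simp only [pauliX, of_apply]
  split_ifs with h
  · rw [h, mul_one, edgeSign_update_mul, one_mul]
  · simp

theorem prod_map_conj_of_mul_self_eq_one {M ι : Type*} [Monoid M] {c : M} (hc : c * c = 1)
    (a : ι → M) (l : List ι) : (l.map fun i => c * a i * c).prod = c * (l.map a).prod * c := by
  induction l with
  | nil => simp [hc]
  | cons i l ih =>
    rw [List.map_cons, List.prod_cons, ih, List.map_cons, List.prod_cons]
    simp only [mul_assoc, ← mul_assoc c c, hc, one_mul]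

theorem eq_update_not_comm {α : Type*} [DecidableEq α] (f g : α → Bool) (v : α) :
    f = Function.update g v (!g v) ↔ g = Function.update f v (!f v) := by
  constructor <;> rintro rfl <;> simp

theorem pauliX_mul_apply (v : V) (M : QMat V) (f g : V → Bool) :
    (pauliX v * M) f g = M (Function.update f v (!f v)) g := by
  simp only [mul_apply, pauliX, of_apply, ite_mul, one_mul, zero_mul, eq_update_not_comm f,
    Finset.sum_ite_eq', Finset.mem_univ, if_true]

-- Exactly one of `f` and `f` with qubit `v` flipped agrees with `g` at `v`.
theorem ite_agree_add_ite_agree_update {α R : Type*} [DecidableEq α] [AddZeroClass R]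
    {v : α} {t : List α} (hv : v ∉ t) (f g : α → Bool) (c : R)
    [Decidable (∀ u, u ∉ t → f u = g u)]
    [Decidable (∀ u, u ∉ t → Function.update f v (!f v) u = g u)]
    [Decidable (∀ u, u ∉ v :: t → f u = g u)] :
    ((if ∀ u, u ∉ t → f u = g u then c else 0) +
      if ∀ u, u ∉ t → Function.update f v (!f v) u = g u then c else 0) =
      if ∀ u, u ∉ v :: t → f u = g u then c else 0 := by
  by_cases H : ∀ u, u ∉ v :: t → f u = g u
  · have hoff : ∀ u, u ≠ v → u ∉ t → f u = g u := fun u huv hut =>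
      H u (by simp [huv, hut])
    by_cases hfv : f v = g v
    · have hsame : ∀ u, u ∉ t → f u = g u := fun u hut => by
        by_cases huv : u = v
        · exact huv ▸ hfv
        · exact hoff u huv hut
      have hflip : ¬∀ u, u ∉ t → Function.update f v (!f v) u = g u := fun H' => by
        simpa [hfv] using H' v hv
      rw [if_pos hsame, if_neg hflip, if_pos H, add_zero]
    · have hsame : ¬∀ u, u ∉ t → f u = g u := fun H' => hfv (H' v hv)
      have hflip : ∀ u, u ∉ t → Function.update f v (!f v) u = g u := fun u hut => by
        by_cases huv : u = v
        · subst huv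
          cases hf : f u <;> cases hg : g u <;> simp_all
        · rw [Function.update_of_ne huv]
          exact hoff u huv hut
      rw [if_neg hsame, if_pos hflip, if_pos H, zero_add]
  · obtain ⟨u, huv, hut, hne⟩ : ∃ u, u ≠ v ∧ u ∉ t ∧ f u ≠ g u := by simpa using H
    have hsame : ¬∀ u, u ∉ t → f u = g u := fun H' => hne (H' u hut)
    have hflip : ¬∀ u, u ∉ t → Function.update f v (!f v) u = g u := fun H' =>
      hne (by simpa [Function.update_of_ne huv] using H' u hut)
    rw [if_neg hsame, if_neg hflip, if_neg H, add_zero]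

theorem prod_map_half_one_add_pauliX {l : List V} (hl : l.Nodup) :
    (l.map fun v => (2 : ℂ)⁻¹ • (1 + pauliX v)).prod =
      of fun f g => if ∀ v, v ∉ l → f v = g v then (2 : ℂ)⁻¹ ^ l.length else 0 := by
  induction l with
  | nil =>
    refine Matrix.ext fun f g => ?_
    simp [one_apply, funext_iff]
  | cons v t ih =>
    obtain ⟨hvt, ht⟩ := List.nodup_cons.1 hl
    refine Matrix.ext fun f g => ?_
    rw [List.map_cons, List.prod_cons, ih ht, smul_mul, add_mul, one_mul, Matrix.smul_apply,
      Matrix.add_apply, pauliX_mul_apply]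
    simp only [of_apply, smul_eq_mul]
    rw [ite_agree_add_ite_agree_update hvt, List.length_cons, pow_succ, mul_ite, mul_zero,
      mul_comm]

theorem prodOn_half_one_add_pauliX (s : Finset V) :
    prodOn s (fun v => (2 : ℂ)⁻¹ • (1 + pauliX v)) =
      of fun f g => if ∀ v, v ∉ s → f v = g v then (2 : ℂ)⁻¹ ^ s.card else 0 := by
  rw [prodOn, prod_map_half_one_add_pauliX s.nodup_toList, Finset.length_toList]
  simp only [Finset.mem_toList]

theorem plusVec_mul_star {ι : Type} [Fintype ι] (f g : ι → Bool) :
    plusVec f * starRingEnd ℂ (plusVec g) = (2 : ℂ)⁻¹ ^ Fintype.card ι := by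
  have hsqrt : (Real.sqrt 2 : ℂ) * Real.sqrt 2 = 2 := by
    rw [← Complex.ofReal_mul, Real.mul_self_sqrt zero_le_two, Complex.ofReal_ofNat]
  simp only [plusVec, map_pow, map_inv₀, Complex.conj_ofReal, ← mul_pow, ← mul_inv, hsqrt]

theorem stabProj_eq_czProd_mul_embedOp_mul_czProd (G : SimpleGraph V) (s : Finset V) :
    stabProj G s = czProd G * embedOp s (outer plusVec) * czProd G := by
  have hconj : ∀ v, (2 : ℂ)⁻¹ • (1 + stab G v) =
      czProd G * ((2 : ℂ)⁻¹ • (1 + pauliX v)) * czProd G := fun v => by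
    rw [stab_eq_czProd_mul_pauliX_mul_czProd, mul_smul_comm, smul_mul_assoc, mul_add, add_mul,
      mul_one, czProd_mul_self, mul_assoc]
  rw [stabProj, prodOn, funext hconj, prod_map_conj_of_mul_self_eq_one (czProd_mul_self G),
    ← prodOn, prodOn_half_one_add_pauliX]
  congr 2
  refine Matrix.ext fun f g => ?_
  simp only [embedOp, outer, of_apply, plusVec_mul_star, Fintype.card_coe]

theorem graphStateVec_apply (G : SimpleGraph V) (f : V → Bool) :
    graphStateVec G f = edgeSign G f * plusVec f := by
  rw [graphStateVec, czProd_eq_diagonal, mulVec_diagonal]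

theorem edgeSign_mul_edgeSign_of_eqOn_compl (G : SimpleGraph V) (s : Finset V)
    {f g : V → Bool} (hfg : ∀ v, v ∉ s → f v = g v) :
    edgeSign G f * edgeSign G g =
      edgeSign (inducedGraph G s) (fun v => f v) * cutSign G s f *
        (edgeSign (inducedGraph G s) (fun v => g v) * cutSign G s g) := by
  have hout : (fun v : {v // v ∉ s} => f v) = fun v : {v // v ∉ s} => g v :=
    funext fun v => hfg v v.2
  rw [edgeSign_eq_inducedGraph_mul_cutSign_mul_inducedGraphC G s f,
    edgeSign_eq_inducedGraph_mul_cutSign_mul_inducedGraphC G s g, hout, mul_mul_mul_comm,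
    edgeSign_mul_self, mul_one]

theorem stabProj_eq_czCut_mul_embedOp_mul_czCut (G : SimpleGraph V) (s : Finset V) :
    stabProj G s =
      czCut G s * embedOp s (outer (graphStateVec (inducedGraph G s))) * czCut G s := by
  rw [stabProj_eq_czProd_mul_embedOp_mul_czProd]
  refine Matrix.ext fun f g => ?_
  rw [czProd_eq_diagonal, czCut_eq_diagonal, mul_diagonal, diagonal_mul, mul_diagonal,
    diagonal_mul]
  simp only [embedOp, outer, of_apply]
  split_ifs with hfg
  · rw [mul_right_comm, edgeSign_mul_edgeSign_of_eqOn_compl G s hfg, graphStateVec_apply,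
      graphStateVec_apply, map_mul, star_edgeSign]
    ring
  · simp

theorem sum_eq_sum_merge (s : Finset V) {M : Type*} [AddCommMonoid M] (F : (V → Bool) → M) :
    ∑ f, F f = ∑ a : {v // v ∈ s} → Bool, ∑ h : {v // v ∉ s} → Bool, F (merge s a h) := by
  rw [← (Equiv.piEquivPiSubtypeProd (· ∈ s) fun _ => Bool).symm.sum_comp,
    Fintype.sum_prod_type]
  rfl

theorem restrict_merge {α : Type} [DecidableEq α] (s : Finset α) (a : {v // v ∈ s} → Bool)
    (h : {v // v ∉ s} → Bool) :
    (fun v : {v // v ∈ s} => merge s a h v) = a :=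
  funext fun v => dif_pos v.2

theorem merge_eqOn_compl_iff {α : Type} [DecidableEq α] (s : Finset α)
    (a b : {v // v ∈ s} → Bool) (h h' : {v // v ∉ s} → Bool) :
    (∀ v, v ∉ s → merge s a h v = merge s b h' v) ↔ h' = h := by
  constructor
  · intro H
    funext v
    simpa [merge, v.2] using (H v v.2).symm
  · rintro rfl v hv
    simp [merge, hv]

theorem trace_embedOp_mul (s : Finset V)
    (A : Matrix ({v // v ∈ s} → Bool) ({v // v ∈ s} → Bool) ℂ) (M : QMat V) :
    trace (embedOp s A * M) = trace (A * ptrace s M) := by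
  simp only [trace, diag, mul_apply, embedOp, ptrace, of_apply, ite_mul, zero_mul,
    Finset.mul_sum]
  rw [sum_eq_sum_merge s]
  refine Finset.sum_congr rfl fun a _ => ?_
  conv_rhs => rw [Finset.sum_comm]
  refine Finset.sum_congr rfl fun h _ => ?_
  rw [sum_eq_sum_merge s]
  simp only [merge_eqOn_compl_iff, restrict_merge, Finset.sum_ite_eq', Finset.mem_univ, if_true]

theorem trace_stabProj_eq_trace_reduced_general (G : SimpleGraph V) (s : Finset V)
    (ρ : QMat V) :
    Matrix.trace (stabProj G s * ρ) =
      Matrix.trace (outer (graphStateVec (inducedGraph G s)) *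
        ptrace s (czCut G s * ρ * czCut G s)) := by
  rw [stabProj_eq_czCut_mul_embedOp_mul_czCut, ← trace_embedOp_mul]
  simp only [Matrix.mul_assoc]
  rw [trace_mul_comm, Matrix.mul_assoc, Matrix.mul_assoc]

/-- for any density operator `ρ`,
`tr(P(V',G) ρ) = tr(|G'⟩⟨G'| ρ̂^{V'})` where `ρ̂ = U ρ U`. -/
theorem trace_stabProj_eq_trace_reduced (G : SimpleGraph V) (s : Finset V)
    (ρ : QMat V) (hρ : ρ.PosSemidef) (htr : ρ.trace = 1) :
    Matrix.trace (stabProj G s * ρ) =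
      Matrix.trace (outer (graphStateVec (inducedGraph G s)) *
        ptrace s (czCut G s * ρ * czCut G s)) :=
  trace_stabProj_eq_trace_reduced_general G s ρ

end GraphStates
end
end

section
/- For the witness W(𝒱,G) = (k − 1/2)I − ∑_{l=1}^k P(V_l,G) associated to a partition 𝒱 of V into k blocks, evaluated on ρ(p) = (1−p)|G⟩⟨G| + p I/2^n, the expectation is tr(W(𝒱,G)ρ(p)) = −1/2 + p·∑_{l=1}^k (1 − 2^{−|V_l|}); hence the white noise tolerance satisfies 1/(2k) < p_tol ≤ 1/k (assuming all |V_l| ≥ 1). -/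
open scoped Classical
open Matrix

noncomputable section

/-! Each generator `S_v` flips qubit `v` and otherwise only multiplies by signs, so in the expansion
of `P(U,G) = 2^{-|U|} ∑_{A ⊆ U} ∏_{v ∈ A} S_v` every term with `A ≠ ∅` has zero diagonal: the
diagonal of `P(U,G)` is constantly `2^{-|U|}`, whence `tr P(U,G) = 2^{n-|U|}`. Since every `S_v`
fixes `|G⟩`, so does `P(U,G)`, and `⟨G|P(U,G)|G⟩ = 1`. Linearity of the trace then gives the value
of `tr(W ρ(p))`, and the bounds on the tolerance come from `1/2 ≤ 1 - 2^{-|V_l|} < 1`. -/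


namespace GraphStates

open Finset

variable {V : Type}

section Flips

variable [DecidableEq V]

def flipAt (i : V) (f : V → Bool) : V → Bool := Function.update f i (!f i)

@[simp]
lemma flipAt_apply_self (i : V) (f : V → Bool) : flipAt i f i = !f i :=
  Function.update_self i _ f

lemma flipAt_apply_of_ne {i v : V} (f : V → Bool) (h : v ≠ i) : flipAt i f v = f v :=
  Function.update_of_ne h _ f

lemma eq_flipAt_comm {i : V} {f g : V → Bool} : f = flipAt i g ↔ g = flipAt i f := by
  constructor <;>
  · rintro rfl
    funext v
    by_cases hv : v = i
    · subst hv; simp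
    · simp [flipAt_apply_of_ne _ hv]

end Flips

def FlipsWithin (s : Set V) (M : QMat V) : Prop :=
  ∀ f g, M f g ≠ 0 → ∀ v ∉ s, f v = g v

namespace FlipsWithin

variable {s t : Set V} {M N : QMat V}

lemma mono (hM : FlipsWithin s M) (hst : s ⊆ t) : FlipsWithin t M :=
  fun f g hfg v hv => hM f g hfg v fun hs => hv (hst hs)

lemma add (hM : FlipsWithin s M) (hN : FlipsWithin s N) : FlipsWithin s (M + N) := by
  intro f g h
  by_cases hMfg : M f g = 0
  · exact hN f g fun hNfg => h (by simp [hMfg, hNfg])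
  · exact hM f g hMfg

lemma smul (c : ℂ) (hM : FlipsWithin s M) : FlipsWithin s (c • M) :=
  fun f g h => hM f g (right_ne_zero_of_mul h)

variable [Fintype V]

lemma one (s : Set V) : FlipsWithin s (1 : QMat V) := by
  intro f g h v _
  have hfg : f = g := by_contra fun hne => h (one_apply_ne hne)
  rw [hfg]

variable [DecidableEq V]

lemma mul (hM : FlipsWithin s M) (hN : FlipsWithin t N) : FlipsWithin (s ∪ t) (M * N) := by
  intro f g h v hv
  obtain ⟨x, -, hx⟩ := exists_ne_zero_of_sum_ne_zero h
  rw [Set.mem_union, not_or] at hv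
  exact (hM f x (left_ne_zero_of_mul hx) v hv.1).trans (hN x g (right_ne_zero_of_mul hx) v hv.2)

end FlipsWithin

section Stabilizers

variable [Fintype V] [DecidableEq V] (G : SimpleGraph V)

lemma card_adj_flipAt (i : V) (f : V → Bool) :
    #{j | G.Adj i j ∧ flipAt i f j = true} = #{j | G.Adj i j ∧ f j = true} :=
  congrArg card <| filter_congr fun j _ =>
    and_congr_right fun hij => by rw [flipAt_apply_of_ne f hij.ne']

lemma stab_apply (i : V) (f g : V → Bool) :
    stab G i f g = if g = flipAt i f then (-1 : ℂ) ^ #{j | G.Adj i j ∧ f j = true} else 0 := by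
  rw [stab, zOn, mul_diagonal]
  change (if f = flipAt i g then (1 : ℂ) else 0) * _ = _
  split_ifs with h h' h'
  · rw [one_mul, filter_filter, h', card_adj_flipAt]
  · exact absurd (eq_flipAt_comm.mp h) h'
  · exact absurd (eq_flipAt_comm.mp h') h
  · rw [zero_mul]

lemma stab_mul_apply (i : V) (M : QMat V) (f g : V → Bool) :
    (stab G i * M) f g = (-1 : ℂ) ^ #{j | G.Adj i j ∧ f j = true} * M (flipAt i f) g := by
  simp only [mul_apply, stab_apply, ite_mul, zero_mul, sum_ite_eq', mem_univ, if_true]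

lemma stab_mulVec_apply (i : V) (x : (V → Bool) → ℂ) (f : V → Bool) :
    (stab G i *ᵥ x) f = (-1 : ℂ) ^ #{j | G.Adj i j ∧ f j = true} * x (flipAt i f) := by
  simp only [mulVec, dotProduct, stab_apply, ite_mul, zero_mul, sum_ite_eq', mem_univ, if_true]

lemma flipsWithin_stab (i : V) : FlipsWithin {i} (stab G i) := by
  intro f g h v hv
  rw [stab_apply, ite_ne_right_iff] at h
  rw [h.1, flipAt_apply_of_ne f hv]

def stabProjList (l : List V) : QMat V :=
  (l.map fun v => (2 : ℂ)⁻¹ • (1 + stab G v)).prod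

lemma stabProjList_cons (a : V) (l : List V) :
    stabProjList G (a :: l) = (2 : ℂ)⁻¹ • (1 + stab G a) * stabProjList G l := rfl

lemma stabProj_eq_stabProjList (s : Finset V) : stabProj G s = stabProjList G s.toList := rfl

lemma flipsWithin_stabProjList (l : List V) : FlipsWithin {v | v ∈ l} (stabProjList G l) := by
  induction l with
  | nil => exact FlipsWithin.one _
  | cons a t ih =>
    rw [stabProjList_cons]
    refine (((FlipsWithin.one _).add (flipsWithin_stab G a)).smul _ |>.mul ih).mono ?_
    rintro v (rfl | hv)
    exacts [List.mem_cons_self, List.mem_cons_of_mem _ hv]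

lemma stabProjList_apply_self (l : List V) (hl : l.Nodup) (f : V → Bool) :
    stabProjList G l f f = (2 : ℂ)⁻¹ ^ l.length := by
  induction l generalizing f with
  | nil => simp [stabProjList]
  | cons a t ih =>
    obtain ⟨hat, ht⟩ := List.nodup_cons.mp hl
    -- `S_a` flips qubit `a`, which `stabProjList G t` never flips back.
    have hoff : stabProjList G t (flipAt a f) f = 0 := by
      by_contra h
      simpa using flipsWithin_stabProjList G t _ _ h a hat
    rw [stabProjList_cons, smul_mul_assoc, add_mul, one_mul, Matrix.smul_apply, Matrix.add_apply,
      stab_mul_apply, hoff, ih ht, List.length_cons, pow_succ]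
    simp [mul_comm]

lemma trace_stabProj (s : Finset V) :
    trace (stabProj G s) = 2 ^ Fintype.card V * (2 : ℂ)⁻¹ ^ s.card := by
  simp only [trace, Matrix.diag, stabProj_eq_stabProjList,
    stabProjList_apply_self G _ s.nodup_toList, length_toList, sum_const, card_univ,
    Fintype.card_fun, Fintype.card_bool, nsmul_eq_mul, Nat.cast_pow, Nat.cast_ofNat]

end Stabilizers

section GraphState

variable [Fintype V] [DecidableEq V] (G : SimpleGraph V)

def edgeCount (f : V → Bool) : ℕ :=
  #{e : Sym2 V | e ∈ G.edgeSet ∧ ∀ v ∈ e, f v = true}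

lemma graphStateVec_apply_s16 (f : V → Bool) :
    graphStateVec G f = (-1 : ℂ) ^ edgeCount G f * ((Real.sqrt 2 : ℂ))⁻¹ ^ Fintype.card V :=
  mulVec_diagonal _ _ _

lemma card_edges_mem_eq_card_adj {i : V} {h : V → Bool} (hi : h i = true) :
    #{e : Sym2 V | (e ∈ G.edgeSet ∧ ∀ v ∈ e, h v = true) ∧ i ∈ e}
      = #{j | G.Adj i j ∧ h j = true} := by
  refine (card_bij (fun j _ => s(i, j)) ?_ ?_ ?_).symm
  · intro j hj
    simp only [mem_filter, mem_univ, true_and] at hj ⊢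
    refine ⟨⟨G.mem_edgeSet.2 hj.1, fun v hv => ?_⟩, Sym2.mem_mk_left i j⟩
    rcases Sym2.mem_iff.mp hv with rfl | rfl
    exacts [hi, hj.2]
  · exact fun j _ j' _ he => Sym2.congr_right.mp he
  · intro e he
    simp only [mem_filter, mem_univ, true_and] at he
    obtain ⟨⟨hes, hall⟩, hie⟩ := he
    refine ⟨Sym2.Mem.other' hie, ?_, Sym2.other_spec' hie⟩
    simp only [mem_filter, mem_univ, true_and]
    exact ⟨by rwa [← SimpleGraph.mem_edgeSet, Sym2.other_spec' hie], hall _ (Sym2.other_mem' hie)⟩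

lemma edgeCount_eq_ite_add (i : V) (h : V → Bool) :
    edgeCount G h = (if h i then #{j | G.Adj i j ∧ h j = true} else 0)
      + #{e : Sym2 V | (e ∈ G.edgeSet ∧ ∀ v ∈ e, h v = true) ∧ i ∉ e} := by
  rw [edgeCount, ← card_filter_add_card_filter_not (fun e => i ∈ e), filter_filter,
    filter_filter]
  congr 1
  split_ifs with hi
  · exact card_edges_mem_eq_card_adj G hi
  · exact card_eq_zero.mpr <| filter_eq_empty_iff.mpr fun e _ he => hi (he.1.2 i he.2)

-- Edges avoiding `i` are counted alike for `f` and `flipAt i f`, while the edges at `i` (one per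
-- neighbour `j` with `f j`) are counted for exactly one of the two.
lemma neg_one_pow_edgeCount_flipAt (i : V) (f : V → Bool) :
    (-1 : ℂ) ^ #{j | G.Adj i j ∧ f j = true} * (-1) ^ edgeCount G (flipAt i f)
      = (-1) ^ edgeCount G f := by
  have havoid : #{e : Sym2 V | (e ∈ G.edgeSet ∧ ∀ v ∈ e, flipAt i f v = true) ∧ i ∉ e}
      = #{e : Sym2 V | (e ∈ G.edgeSet ∧ ∀ v ∈ e, f v = true) ∧ i ∉ e} := by
    refine congrArg card (filter_congr fun e _ => ?_)
    refine ⟨fun ⟨⟨he, hall⟩, hie⟩ => ⟨⟨he, fun v hv => ?_⟩, hie⟩,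
      fun ⟨⟨he, hall⟩, hie⟩ => ⟨⟨he, fun v hv => ?_⟩, hie⟩⟩
    · rw [← flipAt_apply_of_ne f (ne_of_mem_of_not_mem hv hie)]; exact hall v hv
    · rw [flipAt_apply_of_ne f (ne_of_mem_of_not_mem hv hie)]; exact hall v hv
  rw [edgeCount_eq_ite_add G i (flipAt i f), edgeCount_eq_ite_add G i f, havoid, card_adj_flipAt,
    flipAt_apply_self]
  cases f i
  · simp only [Bool.not_false, Bool.false_eq_true, if_true, if_false, zero_add, ← pow_add,
      ← add_assoc, ← two_mul, pow_add _ (2 * _), pow_mul, neg_one_sq, one_pow, one_mul]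
  · simp [pow_add]

lemma stab_mulVec_graphStateVec (i : V) : stab G i *ᵥ graphStateVec G = graphStateVec G := by
  funext f
  rw [stab_mulVec_apply, graphStateVec_apply_s16, graphStateVec_apply_s16, ← mul_assoc,
    neg_one_pow_edgeCount_flipAt]

lemma stabProjList_mulVec_graphStateVec (l : List V) :
    stabProjList G l *ᵥ graphStateVec G = graphStateVec G := by
  induction l with
  | nil => exact one_mulVec _
  | cons a t ih =>
    rw [stabProjList_cons, ← mulVec_mulVec, ih, smul_mulVec, add_mulVec, one_mulVec,
      stab_mulVec_graphStateVec, ← two_smul ℂ, smul_smul, inv_mul_cancel₀ two_ne_zero, one_smul]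

lemma stabProj_mulVec_graphStateVec (s : Finset V) :
    stabProj G s *ᵥ graphStateVec G = graphStateVec G :=
  stabProjList_mulVec_graphStateVec G s.toList

lemma graphStateVec_dotProduct_star : graphStateVec G ⬝ᵥ star (graphStateVec G) = 1 := by
  have hterm : ∀ f,
      graphStateVec G f * star (graphStateVec G f) = (2 : ℂ)⁻¹ ^ Fintype.card V := by
    intro f
    rw [Complex.star_def, Complex.mul_conj, graphStateVec_apply_s16]
    simp [Complex.normSq_ofReal, Real.mul_self_sqrt]
  simp only [dotProduct, Pi.star_apply, hterm, sum_const, card_univ, Fintype.card_fun,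
    Fintype.card_bool, nsmul_eq_mul, Nat.cast_pow, Nat.cast_ofNat, ← mul_pow]
  norm_num

end GraphState

lemma trace_mul_outer {ι : Type} [Fintype ι] (M : Matrix ι ι ℂ) (v : ι → ℂ) :
    trace (M * outer v) = (M *ᵥ v) ⬝ᵥ star v := by
  rw [show outer v = vecMulVec v (star v) from rfl, mul_vecMulVec, trace_vecMulVec]

lemma trace_outer {ι : Type} [Fintype ι] [DecidableEq ι] (v : ι → ℂ) :
    trace (outer v) = v ⬝ᵥ star v := by
  simpa using trace_mul_outer 1 v

section Witness

variable [Fintype V] [DecidableEq V] (G : SimpleGraph V) (𝒱 : Finset (Finset V))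

lemma trace_witnessW_mul_outer_graphStateVec :
    trace (witnessW G 𝒱 * outer (graphStateVec G)) = -1 / 2 := by
  simp only [witnessW, sub_mul, smul_mul_assoc, one_mul, sum_mul, trace_sub, trace_smul,
    trace_sum, trace_mul_outer, trace_outer, stabProj_mulVec_graphStateVec,
    graphStateVec_dotProduct_star, sum_const, nsmul_eq_mul, smul_eq_mul]
  ring

lemma trace_witnessW :
    trace (witnessW G 𝒱)
      = 2 ^ Fintype.card V * (𝒱.card - 1 / 2 - ∑ B ∈ 𝒱, (2 : ℂ)⁻¹ ^ B.card) := by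
  simp only [witnessW, trace_sub, trace_smul, trace_one, trace_sum, trace_stabProj,
    Fintype.card_fun, Fintype.card_bool, Nat.cast_pow, Nat.cast_ofNat, smul_eq_mul, ← mul_sum]
  ring

end Witness

lemma trace_mul_whiteNoise [Fintype V] [DecidableEq V] (W ρ₀ : QMat V) (p : ℝ) :
    trace (W * whiteNoise ρ₀ p)
      = (1 - p) * trace (W * ρ₀) + p / 2 ^ Fintype.card V * trace W := by
  rw [whiteNoise, mul_add, mul_smul_comm, mul_smul_comm, mul_one, trace_add, trace_smul,
    trace_smul, smul_eq_mul, smul_eq_mul, Complex.ofReal_sub, Complex.ofReal_one]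

lemma one_sub_inv_two_pow_mem_Ico {m : ℕ} (hm : m ≠ 0) :
    1 - ((2 : ℝ) ^ m)⁻¹ ∈ Set.Ico (1 / 2) 1 := by
  have h2m : (2 : ℝ) ≤ 2 ^ m := le_self_pow₀ one_le_two hm
  have hinv : ((2 : ℝ) ^ m)⁻¹ ≤ 2⁻¹ := inv_anti₀ two_pos h2m
  have hpos : 0 < ((2 : ℝ) ^ m)⁻¹ := by positivity
  constructor <;> linarith

lemma sum_mem_Ico_half_card {ι : Type} {s : Finset ι} (hs : s.Nonempty) {x : ι → ℝ}
    (hx : ∀ i ∈ s, x i ∈ Set.Ico (1 / 2) 1) : ∑ i ∈ s, x i ∈ Set.Ico (#s / 2 : ℝ) #s := by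
  constructor
  · calc (#s / 2 : ℝ) = ∑ _i ∈ s, (1 / 2 : ℝ) := by rw [sum_const, nsmul_eq_mul]; ring
      _ ≤ ∑ i ∈ s, x i := sum_le_sum fun i hi => (hx i hi).1
  · calc ∑ i ∈ s, x i < ∑ _i ∈ s, (1 : ℝ) := sum_lt_sum_of_nonempty hs fun i hi => (hx i hi).2
      _ = #s := by rw [sum_const, nsmul_eq_mul, mul_one]

lemma half_div_mem_Ioc {k S : ℝ} (hk : 0 < k) (hS : S ∈ Set.Ico (k / 2) k) :
    1 / 2 / S ∈ Set.Ioc (1 / (2 * k)) (1 / k) := by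
  obtain ⟨hkS, hSk⟩ := hS
  have hS : 0 < S := by linarith
  constructor
  · rw [div_lt_div_iff₀ (by positivity) hS]; linarith
  · rw [div_le_div_iff₀ hS hk]; linarith

variable [Fintype V] [DecidableEq V]

/-- for the witness `W(𝒱,G)` of a partition `𝒱` of `V` into `k` blocks,
`tr(W(𝒱,G) ρ(p)) = −1/2 + p ∑_l (1 − 2^{−|V_l|})`, and hence the white noise tolerance
`p_tol = (1/2)/∑_l (1 − 2^{−|V_l|})` satisfies `1/(2k) < p_tol ≤ 1/k`. -/
theorem partition_witness_white_noise (G : SimpleGraph V) (𝒱 : Finset (Finset V))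
    (h𝒱 : IsPartitionOn Finset.univ 𝒱) (hk : 1 ≤ 𝒱.card) (p : ℝ) :
    Matrix.trace (witnessW G 𝒱 * whiteNoise (outer (graphStateVec G)) p) =
      (((-1 / 2 + p * ∑ B ∈ 𝒱, (1 - ((2 : ℝ) ^ B.card)⁻¹)) : ℝ) : ℂ) ∧
    1 / (2 * (𝒱.card : ℝ)) <
      (1 / 2) / (∑ B ∈ 𝒱, (1 - ((2 : ℝ) ^ B.card)⁻¹)) ∧
    (1 / 2) / (∑ B ∈ 𝒱, (1 - ((2 : ℝ) ^ B.card)⁻¹)) ≤ 1 / (𝒱.card : ℝ) := by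
  have h𝒱ne : 𝒱.Nonempty := card_pos.mp hk
  refine ⟨?_, half_div_mem_Ioc (by exact_mod_cast hk) <| sum_mem_Ico_half_card h𝒱ne
    fun B hB => one_sub_inv_two_pow_mem_Ico (h𝒱.1 B hB).card_ne_zero⟩
  rw [trace_mul_whiteNoise, trace_witnessW_mul_outer_graphStateVec, trace_witnessW]
  push_cast
  rw [sum_sub_distrib, sum_const, nsmul_eq_mul, mul_one]
  simp only [inv_pow]
  field_simp
  ring

end GraphStates
end
end

section
/- If for each edge e = (i,j) the state ρ has witness expectation w(e) = tr((I − S_i − S_j)ρ) ≥ 0 fails on e (i.e., w(e) < 0), then ρ is not separable with respect to any bipartition (A,B) of the qubits with i ∈ A and j ∈ B; equivalently, for separable ρ = ∑_k p_k ρ_k^A ⊗ ρ_k^B with i ∈ A, j ∈ B, one has tr((S_i + S_j)ρ) ≤ 1. -/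
open scoped Classical
open Matrix

noncomputable section

namespace GraphStates

variable {V : Type} [Fintype V] [DecidableEq V]

/-! Across the cut, `S_i = P_A ⊗ Q_B` and `S_j = Q_A ⊗ P_B` with `P_A = X_i Z_{N(i) ∩ A}`,
`Q_A = Z_{N(j) ∩ A}`, `P_B = X_j Z_{N(j) ∩ B}` and `Q_B = Z_{N(i) ∩ B}`. Since `i ∈ N(j)` and
`j ∈ N(i)`, both `(P_A, Q_A)` and `(P_B, Q_B)` are pairs of anticommuting Hermitian involutions,
and for such a pair `⟨P⟩² + ⟨Q⟩² ≤ 1` in every state. On a product state `α ⊗ β` the expectation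
`⟨S_i + S_j⟩ = ⟨P_A⟩⟨Q_B⟩ + ⟨Q_A⟩⟨P_B⟩` is therefore at most `1` by Cauchy–Schwarz, and the bound
passes to mixtures by linearity. -/

open scoped ComplexOrder Kronecker

section States

variable {n : Type} [Fintype n]

lemma re_trace_conjTranspose_mul_self_mul_nonneg {ρ : Matrix n n ℂ} (hρ : ρ.PosSemidef)
    (T : Matrix n n ℂ) : 0 ≤ (trace (Tᴴ * T * ρ)).re := by
  rw [trace_mul_cycle, trace_mul_cycle]
  exact (Complex.nonneg_iff.mp (hρ.mul_mul_conjTranspose_same T).trace_nonneg).1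

lemma im_trace_mul_eq_zero_of_isHermitian {M ρ : Matrix n n ℂ} (hM : M.IsHermitian)
    (hρ : ρ.IsHermitian) : (trace (M * ρ)).im = 0 := by
  rw [← Complex.conj_eq_iff_im, ← Complex.star_def, ← trace_conjTranspose, conjTranspose_mul,
    hM.eq, hρ.eq, trace_mul_comm]

lemma IsPure.posSemidef {ρ : Matrix n n ℂ} (h : IsPure ρ) : ρ.PosSemidef := by
  obtain ⟨v, -, rfl⟩ := h
  exact posSemidef_vecMulVec_self_star v

lemma IsPure.trace_eq_one {ρ : Matrix n n ℂ} (h : IsPure ρ) : trace ρ = 1 := by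
  obtain ⟨v, hv, rfl⟩ := h
  simp only [trace, outer, diag_apply, of_apply, Complex.mul_conj]
  exact_mod_cast hv

lemma re_trace_mul_sum_smul_le {κ : Type} [Fintype κ] {p : κ → ℝ} (hp : ∀ k, 0 ≤ p k)
    (hp1 : ∑ k, p k = 1) {M : Matrix n n ℂ} {σ : κ → Matrix n n ℂ} {c : ℝ}
    (hσ : ∀ k, (trace (M * σ k)).re ≤ c) :
    (trace (M * ∑ k, (p k : ℂ) • σ k)).re ≤ c := by
  simp only [Matrix.mul_sum, Matrix.mul_smul, trace_sum, trace_smul, smul_eq_mul, Complex.re_sum,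
    Complex.re_ofReal_mul]
  calc ∑ k, p k * (trace (M * σ k)).re ≤ ∑ k, p k * c :=
        Finset.sum_le_sum fun k _ => mul_le_mul_of_nonneg_left (hσ k) (hp k)
    _ = c := by rw [← Finset.sum_mul, hp1, one_mul]

end States

section AnticommutingPair

variable {n : Type} [Fintype n] [DecidableEq n]

structure IsAnticommutingPair (P Q : Matrix n n ℂ) : Prop where
  isHermitian_left : P.IsHermitian
  isHermitian_right : Q.IsHermitian
  mul_self_left : P * P = 1
  mul_self_right : Q * Q = 1
  anticomm : P * Q + Q * P = 0

lemma IsAnticommutingPair.sq_add_sq_le_one {P Q : Matrix n n ℂ} (h : IsAnticommutingPair P Q)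
    {ρ : Matrix n n ℂ} (hρ : ρ.PosSemidef) (htr : trace ρ = 1) :
    (trace (P * ρ)).re ^ 2 + (trace (Q * ρ)).re ^ 2 ≤ 1 := by
  set x := (trace (P * ρ)).re
  set y := (trace (Q * ρ)).re
  -- `⟨T†T⟩ ≥ 0` for `T = 1 - xP - yQ` reads `1 - x² - y² ≥ 0`.
  set T : Matrix n n ℂ := 1 - (x : ℂ) • P - (y : ℂ) • Q
  have hT : Tᴴ = T := by
    simp [T, conjTranspose_sub, h.isHermitian_left.eq, h.isHermitian_right.eq]
  have hTT : Tᴴ * T = ((1 + x ^ 2 + y ^ 2 : ℝ) : ℂ) • 1 - ((2 * x : ℝ) : ℂ) • P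
      - ((2 * y : ℝ) : ℂ) • Q := by
    have hQP : Q * P = -(P * Q) := eq_neg_of_add_eq_zero_right h.anticomm
    rw [hT]
    simp only [T, sub_mul, mul_sub, one_mul, mul_one, smul_mul_assoc, mul_smul_comm,
      h.mul_self_left, h.mul_self_right, hQP]
    push_cast
    module
  have hpos := re_trace_conjTranspose_mul_self_mul_nonneg hρ T
  simp only [hTT, sub_mul, smul_mul_assoc, one_mul, trace_sub, trace_smul, htr, smul_eq_mul,
    Complex.sub_re, Complex.re_ofReal_mul, Complex.one_re] at hpos
  nlinarith

end AnticommutingPair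

section Pauli

variable {ι : Type} [Fintype ι] [DecidableEq ι]

omit [Fintype ι] in
lemma update_not_involutive (i : ι) :
    Function.Involutive fun g : ι → Bool => Function.update g i (!g i) := by
  intro g
  simp

lemma pauliX_apply_comm (i : ι) (f g : ι → Bool) : pauliX i f g = pauliX i g f := by
  simp only [pauliX, of_apply, eq_comm (a := f), (update_not_involutive i).eq_iff]

lemma isHermitian_pauliX (i : ι) : (pauliX i).IsHermitian := by
  ext f g
  rw [conjTranspose_apply, pauliX_apply_comm]
  simp [pauliX, apply_ite]

lemma pauliX_mul_self (i : ι) : pauliX i * pauliX i = 1 := by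
  ext f g
  simp [pauliX, mul_apply, one_apply]

omit [Fintype ι] [DecidableEq ι] in
lemma neg_one_pow_card_filter (s : Finset ι) (f : ι → Bool) :
    (-1 : ℂ) ^ (s.filter fun v => f v = true).card =
      ∏ v ∈ s, if f v = true then -1 else 1 := by
  rw [Finset.prod_ite, Finset.prod_const, Finset.prod_const_one, mul_one]

omit [Fintype ι] in
lemma neg_one_pow_card_filter_update_not (s : Finset ι) (g : ι → Bool) (i : ι) :
    (-1 : ℂ) ^ (s.filter fun v => Function.update g i (!g i) v = true).card =
      (if i ∈ s then -1 else 1) * (-1 : ℂ) ^ (s.filter fun v => g v = true).card := by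
  simp only [neg_one_pow_card_filter]
  split_ifs with hi
  · rw [← Finset.mul_prod_erase s _ hi, ← Finset.mul_prod_erase s _ hi,
      Finset.prod_congr rfl fun v hv => by rw [Function.update_of_ne (Finset.ne_of_mem_erase hv)]]
    cases g i <;> simp
  · rw [one_mul]
    exact Finset.prod_congr rfl fun v hv => by
      rw [Function.update_of_ne (ne_of_mem_of_not_mem hv hi)]

omit [DecidableEq ι] in
lemma isHermitian_zOn (s : Finset ι) : (zOn s).IsHermitian :=
  isHermitian_diagonal_of_self_adjoint _ (funext fun f => by simp [star_pow])

lemma zOn_mul_self (s : Finset ι) : zOn s * zOn s = 1 := by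
  rw [zOn, diagonal_mul_diagonal, ← diagonal_one]
  congr 1
  funext f
  rw [← pow_add, ← two_mul, pow_mul, neg_one_sq, one_pow]

lemma zOn_mul_comm (s t : Finset ι) : zOn s * zOn t = zOn t * zOn s := by
  simp only [zOn, diagonal_mul_diagonal, mul_comm]

lemma pauliX_mul_zOn (i : ι) (s : Finset ι) :
    pauliX i * zOn s = (if i ∈ s then -1 else 1 : ℂ) • (zOn s * pauliX i) := by
  ext f g
  rw [Matrix.smul_apply, zOn, mul_diagonal, diagonal_mul, smul_eq_mul]
  by_cases h : f = Function.update g i (!g i)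
  · rw [h, neg_one_pow_card_filter_update_not]
    ring_nf
    split_ifs <;> ring
  · simp [pauliX, h]

lemma pauliX_mul_zOn_of_notMem {i : ι} {s : Finset ι} (hi : i ∉ s) :
    pauliX i * zOn s = zOn s * pauliX i := by
  simp [pauliX_mul_zOn, hi]

lemma pauliX_mul_zOn_of_mem {i : ι} {s : Finset ι} (hi : i ∈ s) :
    pauliX i * zOn s = -(zOn s * pauliX i) := by
  simp [pauliX_mul_zOn, hi]

lemma isAnticommutingPair_pauliX_mul_zOn {i : ι} {s t : Finset ι} (hs : i ∉ s) (ht : i ∈ t) :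
    IsAnticommutingPair (pauliX i * zOn s) (zOn t) where
  isHermitian_left := by
    rw [IsHermitian, conjTranspose_mul, (isHermitian_pauliX i).eq, (isHermitian_zOn s).eq,
      pauliX_mul_zOn_of_notMem hs]
  isHermitian_right := isHermitian_zOn t
  mul_self_left := by
    rw [mul_assoc, ← mul_assoc (zOn s), ← pauliX_mul_zOn_of_notMem hs, mul_assoc,
      zOn_mul_self, mul_one, pauliX_mul_self]
  mul_self_right := zOn_mul_self t
  anticomm := by
    have hZX : zOn t * pauliX i = -(pauliX i * zOn t) := by
      rw [pauliX_mul_zOn_of_mem ht, neg_neg]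
    rw [mul_assoc, ← mul_assoc (zOn t), hZX, neg_mul, mul_assoc, zOn_mul_comm t s,
      add_neg_cancel]

end Pauli

section TensorSplit

variable {V : Type} [Fintype V] [DecidableEq V] (s : Finset V)

abbrev splitEquiv : (V → Bool) ≃ ({v // v ∈ s} → Bool) × ({v // v ∉ s} → Bool) :=
  Equiv.piEquivPiSubtypeProd (· ∈ s) fun _ => Bool

omit [Fintype V] in
lemma tensorSplit_eq_submatrix_kronecker
    (a : Matrix ({v // v ∈ s} → Bool) ({v // v ∈ s} → Bool) ℂ)
    (b : Matrix ({v // v ∉ s} → Bool) ({v // v ∉ s} → Bool) ℂ) :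
    tensorSplit s a b = (a ⊗ₖ b).submatrix (splitEquiv s) (splitEquiv s) := rfl

lemma tensorSplit_mul_tensorSplit
    (a a' : Matrix ({v // v ∈ s} → Bool) ({v // v ∈ s} → Bool) ℂ)
    (b b' : Matrix ({v // v ∉ s} → Bool) ({v // v ∉ s} → Bool) ℂ) :
    tensorSplit s a b * tensorSplit s a' b' = tensorSplit s (a * a') (b * b') := by
  simp only [tensorSplit_eq_submatrix_kronecker, submatrix_mul_equiv, mul_kronecker_mul]

lemma trace_tensorSplit
    (a : Matrix ({v // v ∈ s} → Bool) ({v // v ∈ s} → Bool) ℂ)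
    (b : Matrix ({v // v ∉ s} → Bool) ({v // v ∉ s} → Bool) ℂ) :
    trace (tensorSplit s a b) = trace a * trace b := by
  rw [tensorSplit_eq_submatrix_kronecker, ← trace_kronecker]
  exact Equiv.sum_comp (splitEquiv s) fun p => (a ⊗ₖ b) p p

lemma tensorSplit_diagonal (d : ({v // v ∈ s} → Bool) → ℂ)
    (d' : ({v // v ∉ s} → Bool) → ℂ) :
    tensorSplit s (diagonal d) (diagonal d') =
      diagonal fun f => d (fun v => f v) * d' (fun v => f v) := by
  rw [tensorSplit_eq_submatrix_kronecker, diagonal_kronecker_diagonal, submatrix_diagonal_equiv]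
  rfl

omit [Fintype V] in
lemma splitEquiv_update_of_mem {i : V} (hi : i ∈ s) (g : V → Bool) (b : Bool) :
    splitEquiv s (Function.update g i b) =
      (Function.update (splitEquiv s g).1 ⟨i, hi⟩ b, (splitEquiv s g).2) := by
  ext v
  · by_cases h : v = ⟨i, hi⟩
    · subst h
      simp
    · simp [Function.update_of_ne h, Function.update_of_ne (Subtype.coe_ne_coe.mpr h)]
  · simp [Function.update_of_ne (ne_of_mem_of_not_mem hi v.2).symm]

omit [Fintype V] in
lemma splitEquiv_update_of_notMem {i : V} (hi : i ∉ s) (g : V → Bool) (b : Bool) :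
    splitEquiv s (Function.update g i b) =
      ((splitEquiv s g).1, Function.update (splitEquiv s g).2 ⟨i, hi⟩ b) := by
  ext v
  · simp [Function.update_of_ne (ne_of_mem_of_not_mem v.2 hi)]
  · by_cases h : v = ⟨i, hi⟩
    · subst h
      simp
    · simp [Function.update_of_ne h, Function.update_of_ne (Subtype.coe_ne_coe.mpr h)]

lemma pauliX_eq_tensorSplit_of_mem {i : V} (hi : i ∈ s) :
    pauliX i = tensorSplit s (pauliX ⟨i, hi⟩) 1 := by
  ext f g
  have hflip := (splitEquiv s).apply_eq_iff_eq (x := f) (y := Function.update g i (!g i))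
  rw [splitEquiv_update_of_mem s hi, Prod.ext_iff] at hflip
  simp only [tensorSplit_eq_submatrix_kronecker, submatrix_apply, kroneckerMap_apply, pauliX,
    of_apply, Matrix.one_apply, ← hflip, ite_zero_mul_ite_zero, mul_one]
  rfl

lemma pauliX_eq_tensorSplit_of_notMem {i : V} (hi : i ∉ s) :
    pauliX i = tensorSplit s 1 (pauliX ⟨i, hi⟩) := by
  ext f g
  have hflip := (splitEquiv s).apply_eq_iff_eq (x := f) (y := Function.update g i (!g i))
  rw [splitEquiv_update_of_notMem s hi, Prod.ext_iff] at hflip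
  simp only [tensorSplit_eq_submatrix_kronecker, submatrix_apply, kroneckerMap_apply, pauliX,
    of_apply, Matrix.one_apply, ← hflip, ite_zero_mul_ite_zero, mul_one]
  rfl

omit [Fintype V] [DecidableEq V] in
lemma card_filter_subtype (p q : V → Prop) [DecidablePred p] [DecidablePred q] (t : Finset V) :
    ((t.subtype p).filter fun v : Subtype p => q v).card = ((t.filter q).filter p).card := by
  have h : ((t.subtype p).filter fun v : Subtype p => q v) = (t.filter q).subtype p := by
    ext v
    simp [and_comm]
  rw [h, Finset.card_subtype]

lemma zOn_eq_tensorSplit (t : Finset V) :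
    zOn t = tensorSplit s (zOn (t.subtype (· ∈ s))) (zOn (t.subtype (· ∉ s))) := by
  rw [zOn, zOn, zOn, tensorSplit_diagonal]
  congr 1
  funext f
  rw [← pow_add, card_filter_subtype (· ∈ s) (f · = true),
    card_filter_subtype (· ∉ s) (f · = true), Finset.card_filter_add_card_filter_not]

lemma stab_eq_tensorSplit_of_mem (G : SimpleGraph V) {i : V} (hi : i ∈ s) :
    stab G i = tensorSplit s
      (pauliX ⟨i, hi⟩ * zOn ((Finset.univ.filter (G.Adj i)).subtype (· ∈ s)))
      (zOn ((Finset.univ.filter (G.Adj i)).subtype (· ∉ s))) := by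
  rw [stab, pauliX_eq_tensorSplit_of_mem s hi, zOn_eq_tensorSplit s,
    tensorSplit_mul_tensorSplit, one_mul]

lemma stab_eq_tensorSplit_of_notMem (G : SimpleGraph V) {i : V} (hi : i ∉ s) :
    stab G i = tensorSplit s
      (zOn ((Finset.univ.filter (G.Adj i)).subtype (· ∈ s)))
      (pauliX ⟨i, hi⟩ * zOn ((Finset.univ.filter (G.Adj i)).subtype (· ∉ s))) := by
  rw [stab, pauliX_eq_tensorSplit_of_notMem s hi, zOn_eq_tensorSplit s,
    tensorSplit_mul_tensorSplit, one_mul]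

lemma re_trace_tensorSplit_add_mul_le_one
    {PA QA α : Matrix ({v // v ∈ s} → Bool) ({v // v ∈ s} → Bool) ℂ}
    {PB QB β : Matrix ({v // v ∉ s} → Bool) ({v // v ∉ s} → Bool) ℂ}
    (hA : IsAnticommutingPair PA QA) (hB : IsAnticommutingPair PB QB)
    (hα : α.PosSemidef) (hα1 : trace α = 1) (hβ : β.PosSemidef) (hβ1 : trace β = 1) :
    (trace ((tensorSplit s PA QB + tensorSplit s QA PB) * tensorSplit s α β)).re ≤ 1 := by
  have hsqA := hA.sq_add_sq_le_one hα hα1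
  have hsqB := hB.sq_add_sq_le_one hβ hβ1
  simp only [add_mul, tensorSplit_mul_tensorSplit, trace_add, trace_tensorSplit, Complex.add_re,
    Complex.mul_re, im_trace_mul_eq_zero_of_isHermitian hA.isHermitian_left hα.1,
    im_trace_mul_eq_zero_of_isHermitian hA.isHermitian_right hα.1,
    im_trace_mul_eq_zero_of_isHermitian hB.isHermitian_left hβ.1,
    im_trace_mul_eq_zero_of_isHermitian hB.isHermitian_right hβ.1, mul_zero, sub_zero]
  nlinarith [sq_nonneg ((trace (PA * α)).re - (trace (QB * β)).re),
    sq_nonneg ((trace (QA * α)).re - (trace (PB * β)).re)]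

end TensorSplit

/-- if `ρ` is separable with respect to a bipartition `(A, B)` with
`i ∈ A` and `j ∈ B` for an edge `(i,j)` of `G`, then `tr((S_i + S_j) ρ) ≤ 1`;
equivalently the witness `W_{ij} = I − S_i − S_j` has nonnegative expectation. -/
theorem separable_bipartite_witness (G : SimpleGraph V) (A : Finset V) (i j : V)
    (hij : G.Adj i j) (hi : i ∈ A) (hj : j ∉ A) (ρ : QMat V)
    (hsep : SeparableWrt A ρ) :
    (Matrix.trace ((stab G i + stab G j) * ρ)).re ≤ 1 := by
  obtain ⟨κ, _, p, a, b, hp0, hp1, hpure, rfl⟩ := hsep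
  have hA : IsAnticommutingPair
      (pauliX ⟨i, hi⟩ * zOn ((Finset.univ.filter (G.Adj i)).subtype (· ∈ A)))
      (zOn ((Finset.univ.filter (G.Adj j)).subtype (· ∈ A))) :=
    isAnticommutingPair_pauliX_mul_zOn (by simp) (by simp [hij.symm])
  have hB : IsAnticommutingPair
      (pauliX ⟨j, hj⟩ * zOn ((Finset.univ.filter (G.Adj j)).subtype (· ∉ A)))
      (zOn ((Finset.univ.filter (G.Adj i)).subtype (· ∉ A))) :=
    isAnticommutingPair_pauliX_mul_zOn (by simp) (by simp [hij])
  rw [stab_eq_tensorSplit_of_mem A G hi, stab_eq_tensorSplit_of_notMem A G hj]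
  refine re_trace_mul_sum_smul_le hp0 hp1 fun k => ?_
  obtain ⟨ha, hb⟩ := hpure k
  exact re_trace_tensorSplit_add_mul_le_one A hA hB ha.posSemidef ha.trace_eq_one
    hb.posSemidef hb.trace_eq_one

end GraphStates
end
end
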